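/- There exists a real number s with 0.327 < s < 0.328 such that (s, s) is a positive solution of the equilateral pentagonal Siamese system; and there exists a positive solution (x, x̃) of the equilateral pentagonal Siamese system with 0.0711 < x < 0.0712 and 0.4923 < x̃ < 0.4924, in which case (x̃, x) is also a positive solution. -/

import Mathlib

/-!
Both solutions are produced by the intermediate value theorem applied to `pentMap x - x` and to
`pentMap (pentMap x) - x`, where `pentMap` is the map defining the system. With
`v = (1 - x²)⁻¹` one has `pentMap x = (v² - 5v + 5) / 2`, a quadratic decreasing for `v < 5/2`;
hence `pentMap` is strictly decreasing on `[0, 1/2]`, which keeps `pentMap x` inside the required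
window and away from the pole of `pentMap`.
-/

/-- `(x, x̃) = p` is a positive solution of the equilateral pentagonal Siamese
system. -/
def EqPentSol (p : ℝ × ℝ) : Prop :=
  0 < p.1 ∧ p.1 < Real.sqrt 3 / 2 ∧ 0 < p.2 ∧ p.2 < Real.sqrt 3 / 2 ∧
  p.2 = (5 * p.1 ^ 4 - 5 * p.1 ^ 2 + 1) / (2 * (1 - p.1 ^ 2) ^ 2) ∧
  p.1 = (5 * p.2 ^ 4 - 5 * p.2 ^ 2 + 1) / (2 * (1 - p.2 ^ 2) ^ 2)

open Set

noncomputable def pentMap (x : ℝ) : ℝ := (5 * x ^ 4 - 5 * x ^ 2 + 1) / (2 * (1 - x ^ 2) ^ 2)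

lemma half_lt_sqrt_three_div_two : (1 / 2 : ℝ) < √3 / 2 := by
  have : (1 : ℝ) < √3 := (Real.lt_sqrt zero_le_one).2 (by norm_num)
  linarith

lemma eqPentSol_of_lt_half {x y : ℝ} (hx₀ : 0 < x) (hx : x < 1 / 2) (hy₀ : 0 < y)
    (hy : y < 1 / 2) (hxy : y = pentMap x) (hyx : x = pentMap y) : EqPentSol (x, y) :=
  ⟨hx₀, hx.trans half_lt_sqrt_three_div_two, hy₀, hy.trans half_lt_sqrt_three_div_two, hxy, hyx⟩

lemma EqPentSol.swap {p : ℝ × ℝ} (h : EqPentSol p) : EqPentSol p.swap :=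
  let ⟨hx₀, hx, hy₀, hy, hxy, hyx⟩ := h
  ⟨hy₀, hy, hx₀, hx, hyx, hxy⟩

lemma pentMap_eq_of_sq_ne_one {x : ℝ} (hx : x ^ 2 ≠ 1) :
    pentMap x = ((1 - x ^ 2)⁻¹ ^ 2 - 5 * (1 - x ^ 2)⁻¹ + 5) / 2 := by
  have : 1 - x ^ 2 ≠ 0 := sub_ne_zero.2 hx.symm
  unfold pentMap
  field_simp
  ring

lemma strictAntiOn_pentMap : StrictAntiOn pentMap (Icc 0 (1 / 2)) := by
  intro a ⟨ha₀, ha⟩ b ⟨_, hb⟩ hab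
  have ha1 : a ^ 2 ≠ 1 := by nlinarith
  have hb1 : b ^ 2 ≠ 1 := by nlinarith
  rw [pentMap_eq_of_sq_ne_one ha1, pentMap_eq_of_sq_ne_one hb1]
  set u := (1 - a ^ 2)⁻¹
  set v := (1 - b ^ 2)⁻¹
  have hu : 1 ≤ u := one_le_inv_iff₀.2 ⟨by nlinarith, by nlinarith⟩
  have hv : v ≤ 4 / 3 := by
    rw [inv_le_comm₀ (by nlinarith) (by norm_num)]
    nlinarith
  have huv : u < v := inv_strictAnti₀ (by nlinarith) (by nlinarith)
  nlinarith [mul_pos (sub_pos.2 huv) (show 0 < 5 - u - v by linarith)]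

lemma continuousOn_pentMap : ContinuousOn pentMap (Icc 0 (1 / 2)) := by
  refine ContinuousOn.div (by fun_prop) (by fun_prop) fun x ⟨_, hx⟩ => ?_
  have : 0 < 1 - x ^ 2 := by nlinarith
  positivity

lemma mapsTo_pentMap_Icc {a b : ℝ} (ha : 0 ≤ a) (hb : b ≤ 1 / 2) :
    MapsTo pentMap (Icc a b) (Icc (pentMap b) (pentMap a)) := fun _ hx =>
  have hab : Icc a b ⊆ Icc 0 (1 / 2) := Icc_subset_Icc ha hb
  ⟨strictAntiOn_pentMap.antitoneOn (hab hx) (hab (right_mem_Icc.2 (hx.1.trans hx.2))) hx.2,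
    strictAntiOn_pentMap.antitoneOn (hab (left_mem_Icc.2 (hx.1.trans hx.2))) (hab hx) hx.1⟩

lemma mapsTo_pentMap_Ioo {a b : ℝ} (ha : 0 ≤ a) (hb : b ≤ 1 / 2) :
    MapsTo pentMap (Ioo a b) (Ioo (pentMap b) (pentMap a)) := fun _ hx =>
  have hab : Icc a b ⊆ Icc 0 (1 / 2) := Icc_subset_Icc ha hb
  have hle : a ≤ b := (hx.1.trans hx.2).le
  ⟨strictAntiOn_pentMap (hab (Ioo_subset_Icc_self hx)) (hab (right_mem_Icc.2 hle)) hx.2,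
    strictAntiOn_pentMap (hab (left_mem_Icc.2 hle)) (hab (Ioo_subset_Icc_self hx)) hx.1⟩

lemma exists_pentMap_eq_self : ∃ s ∈ Ioo (0.327 : ℝ) 0.328, pentMap s = s := by
  have hc : ContinuousOn (fun x => pentMap x - x) (Icc 0.327 0.328) :=
    (continuousOn_pentMap.mono (Icc_subset_Icc (by norm_num) (by norm_num))).sub continuousOn_id
  have h0 : (0 : ℝ) ∈ Ioo (pentMap 0.328 - 0.328) (pentMap 0.327 - 0.327) := by
    constructor <;> norm_num [pentMap]
  obtain ⟨s, hs, hfs⟩ := intermediate_value_Ioo' (by norm_num) hc h0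
  exact ⟨s, hs, sub_eq_zero.1 hfs⟩

lemma exists_pentMap_pentMap_eq_self :
    ∃ x ∈ Ioo (0.0711 : ℝ) 0.0712, pentMap (pentMap x) = x := by
  have hc : ContinuousOn (fun x => pentMap (pentMap x) - x) (Icc 0.0711 0.0712) :=
    (continuousOn_pentMap.comp
      (continuousOn_pentMap.mono (Icc_subset_Icc (by norm_num) (by norm_num)))
      ((mapsTo_pentMap_Icc (by norm_num) (by norm_num)).mono_right
        (Icc_subset_Icc (by norm_num [pentMap]) (by norm_num [pentMap])))).sub continuousOn_id
  have h0 : (0 : ℝ) ∈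
      Ioo (pentMap (pentMap 0.0712) - 0.0712) (pentMap (pentMap 0.0711) - 0.0711) := by
    constructor <;> norm_num [pentMap]
  obtain ⟨x, hx, hfx⟩ := intermediate_value_Ioo' (by norm_num) hc h0
  exact ⟨x, hx, sub_eq_zero.1 hfx⟩

/-- The symmetric solution and the two asymmetric solutions of the equilateral
pentagonal Siamese system, with numerical bounds. -/
theorem eq_pent_siamese_solutions :
    (∃ s : ℝ, 0.327 < s ∧ s < 0.328 ∧ EqPentSol (s, s)) ∧
    (∃ x xt : ℝ, EqPentSol (x, xt) ∧
      0.0711 < x ∧ x < 0.0712 ∧ 0.4923 < xt ∧ xt < 0.4924 ∧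
      EqPentSol (xt, x)) := by
  constructor
  · obtain ⟨s, ⟨hs₁, hs₂⟩, hfs⟩ := exists_pentMap_eq_self
    exact ⟨s, hs₁, hs₂, eqPentSol_of_lt_half (by linarith) (by linarith) (by linarith)
      (by linarith) hfs.symm hfs.symm⟩
  · obtain ⟨x, hx, hffx⟩ := exists_pentMap_pentMap_eq_self
    obtain ⟨hxt₁, hxt₂⟩ := mapsTo_pentMap_Ioo (by norm_num) (by norm_num) hx
    have h₁ : (0.4923 : ℝ) < pentMap 0.0712 := by norm_num [pentMap]
    have h₂ : pentMap 0.0711 < (0.4924 : ℝ) := by norm_num [pentMap]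
    have hsol : EqPentSol (x, pentMap x) :=
      eqPentSol_of_lt_half (by linarith [hx.1]) (by linarith [hx.2]) (by linarith)
        (by linarith) rfl hffx.symm
    exact ⟨x, pentMap x, hsol, hx.1, hx.2, by linarith, by linarith, hsol.swap⟩
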